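/- Let n ≥ 6 and let T_{n,3} be the tournament on {1,…,n} with back edges n → 1, n → 2 and n → 3. A weight matrix Λ = (λ_{ij}) is (1,2)-symplectic for T_{n,3} if and only if λ_{ij} = λ_{i(i+1)} + λ_{(i+1)(i+2)} + ⋯ + λ_{(j−1)j} for all pairs 1 ≤ i < j ≤ n except the pairs (1,n), (2,n), (3,n), and λ_{2n} = λ_{12} + λ_{1n} and λ_{3n} = λ_{12} + λ_{23} + λ_{1n} (with λ_{1n} an unconstrained positive parameter). -/
import Mathlib


/-- In the tournament `T_{n,k}` on `{1,…,n}`, vertex `i` beats vertex `j`: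
for `i < j` one has `i → j`, except that when `j = n` and `i ≤ k` instead `n → i`. -/
def Beats (n k i j : ℕ) : Prop :=
  (i < j ∧ ¬ (j = n ∧ i ≤ k)) ∨ (j < i ∧ i = n ∧ j ≤ k)

open Classical in
/-- The sign `ε_{ij}`: `1` if `i → j`, `-1` if `j → i`, `0` if `i = j`. -/
noncomputable def eps (n k i j : ℕ) : ℝ :=
  if Beats n k i j then 1 else if Beats n k j i then -1 else 0

/-- The coefficient `C_{ijl} = μ_{ij} - μ_{il} + μ_{jl}` where `μ_{ij} = ε_{ij} λ_{ij}`. -/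
noncomputable def Cco (n k : ℕ) (lam : ℕ → ℕ → ℝ) (i j l : ℕ) : ℝ :=
  eps n k i j * lam i j - eps n k i l * lam i l + eps n k j l * lam j l

/-- `lam` is a weight matrix on indices `1,…,n`: symmetric, zero diagonal,
positive off-diagonal entries. -/
def IsWeight (n : ℕ) (lam : ℕ → ℕ → ℝ) : Prop :=
  (∀ i j, lam i j = lam j i) ∧ (∀ i, lam i i = 0) ∧
  (∀ i j, 1 ≤ i → i ≤ n → 1 ≤ j → j ≤ n → i ≠ j → 0 < lam i j)

/-- `lam` is (1,2)-symplectic for `T_{n,k}`: `C_{ijl} = 0` for every triple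
`1 ≤ i < j < l ≤ n` which is not a 3-cycle of `T_{n,k}`, i.e. every triple
except those of the form `(i, j, n)` with `i ≤ k < j`. -/
def IsOneTwoSymplectic (n k : ℕ) (lam : ℕ → ℕ → ℝ) : Prop :=
  ∀ i j l, 1 ≤ i → i < j → j < l → l ≤ n →
    ¬ (l = n ∧ i ≤ k ∧ k < j) → Cco n k lam i j l = 0

lemma eps_one {n i j : ℕ} (h : i < j) (hj : ¬ (j = n ∧ i ≤ 3)) : eps n 3 i j = 1 := by
  unfold eps
  rw [if_pos (show Beats n 3 i j from Or.inl ⟨h, hj⟩)]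

lemma eps_neg {n i : ℕ} (hi3 : i ≤ 3) (hin : i < n) : eps n 3 i n = -1 := by
  unfold eps
  rw [if_neg, if_pos (show Beats n 3 n i from Or.inr ⟨hin, rfl, hi3⟩)]
  rintro (⟨h1, h2⟩ | ⟨h1, h2, h3⟩)
  · exact h2 ⟨rfl, hi3⟩
  · omega

/-- For `n ≥ 6`, a weight matrix `Λ` is (1,2)-symplectic for `T_{n,3}` (back edges
`n → 1`, `n → 2`, `n → 3`) iff `λ_{ij} = λ_{i(i+1)} + ⋯ + λ_{(j-1)j}` for all pairs
`1 ≤ i < j ≤ n` except `(1,n)`, `(2,n)`, `(3,n)`, and `λ_{2n} = λ_{12} + λ_{1n}`,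
`λ_{3n} = λ_{12} + λ_{23} + λ_{1n}` (with `λ_{1n}` unconstrained). -/
theorem family_k_three (n : ℕ) (hn : 6 ≤ n)
    (lam : ℕ → ℕ → ℝ) (hΛ : IsWeight n lam) :
    IsOneTwoSymplectic n 3 lam ↔
      ((∀ i j, 1 ≤ i → i < j → j ≤ n → ¬ (j = n ∧ i ≤ 3) →
          lam i j = ∑ m ∈ Finset.Ico i j, lam m (m + 1)) ∧
       lam 2 n = lam 1 2 + lam 1 n ∧
       lam 3 n = lam 1 2 + lam 2 3 + lam 1 n) := by
  constructor
  · intro H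
    have B : ∀ j, ∀ i, 1 ≤ i → i < j → j ≤ n → ¬ (j = n ∧ i ≤ 3) →
        lam i j = ∑ m ∈ Finset.Ico i j, lam m (m + 1) := by
      intro j
      induction j using Nat.strong_induction_on with
      | _ j ih =>
        intro i hi hij hjn hne
        obtain ⟨m, rfl⟩ : ∃ m, j = m + 1 := ⟨j - 1, by omega⟩
        rcases eq_or_lt_of_le (Nat.lt_succ_iff.mp hij) with h | h
        · subst h
          simp
        · have hC := H i m (m + 1) hi h (Nat.lt_succ_self m) hjn (by omega)
          unfold Cco at hC
          rw [eps_one h (by omega), eps_one hij hne,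
            eps_one (Nat.lt_succ_self m) (by omega)] at hC
          have hrec := ih m (Nat.lt_succ_self m) i hi h (by omega) (by omega)
          rw [Finset.sum_Ico_succ_top (by omega : i ≤ m)]
          linarith
    have hC2 := H 1 2 n (by norm_num) (by norm_num) (by omega) le_rfl (by omega)
    have hC3 := H 2 3 n (by norm_num) (by norm_num) (by omega) le_rfl (by omega)
    unfold Cco at hC2 hC3
    rw [eps_one (by norm_num) (by omega), eps_neg (by norm_num) (by omega),
      eps_neg (by norm_num) (by omega)] at hC2
    rw [eps_one (by norm_num) (by omega), eps_neg (by norm_num) (by omega),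
      eps_neg (by norm_num) (by omega)] at hC3
    refine ⟨fun i j h1 h2 h3 h4 => B j i h1 h2 h3 h4, by linarith, by linarith⟩
  · rintro ⟨hsum, h2, h3⟩ i j l hi hij hjl hln hne
    by_cases hl3 : l = n ∧ j ≤ 3
    · obtain ⟨rfl, hj3⟩ := hl3
      unfold Cco
      rw [eps_one hij (by omega), eps_neg (by omega) (by omega),
        eps_neg hj3 (by omega)]
      have h13 : lam 1 3 = lam 1 2 + lam 2 3 := by
        have := hsum 1 3 (by norm_num) (by norm_num) (by omega) (by omega)
        rw [show Finset.Ico 1 3 = {1, 2} from rfl] at this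
        simpa using this
      have hi2 : i ≤ 2 := by omega
      interval_cases i <;> interval_cases j <;> linarith
    · have hi' : ¬ (l = n ∧ i ≤ 3) := by omega
      unfold Cco
      rw [eps_one hij (by omega), eps_one (lt_trans hij hjl) hi',
        eps_one hjl hl3]
      rw [hsum i j hi hij (by omega) (by omega),
        hsum i l hi (lt_trans hij hjl) hln hi',
        hsum j l (by omega) hjl hln hl3]
      have := Finset.sum_Ico_consecutive (fun m => lam m (m + 1))
        (le_of_lt hij) (le_of_lt hjl)
      linarith
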